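/- Let Δ be a finite simplicial complex on vertex set V and e = {a,b} an edge of Δ satisfying the link condition lk_Δ({a,b}) = lk_Δ({a}) ∩ lk_Δ({b}), and let Δ' = Δ/{a,b} be the contraction of e. Then f_0(Δ') = f_0(Δ) − 1 and f_1(Δ') = f_1(Δ) − f_0(lk_Δ(e)) − 1; consequently, for every integer d, f_1(Δ) − (2d−3)·f_0(Δ) + 2d(d−2) = [f_1(Δ') − (2d−3)·f_0(Δ') + 2d(d−2)] + [f_0(lk_Δ(e)) − 2(d−2)], i.e., γ_2(Δ) = γ_2(Δ') + γ_1(lk_Δ(e)) where γ_2 is computed with parameter d and γ_1 with parameter d−2. -/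

import Mathlib

/-- A finite simplicial complex on a finite vertex set `V`: a collection of nonempty
subsets of `V` (faces), closed under taking nonempty subsets, containing all singletons. -/
structure SC (α : Type*) where
  V : Finset α
  faces : Set (Finset α)
  nonempty_mem : ∀ F ∈ faces, F.Nonempty
  subset_V : ∀ F ∈ faces, F ⊆ V
  down_closed : ∀ F ∈ faces, ∀ T ⊆ F, T.Nonempty → T ∈ faces
  singleton_mem : ∀ x ∈ V, ({x} : Finset α) ∈ faces

/-- The link of a face `F` in a collection of faces `K`. -/
def lkS {α : Type*} [DecidableEq α] (K : Set (Finset α)) (F : Finset α) : Set (Finset α) :=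
  {T | T.Nonempty ∧ T ∩ F = ∅ ∧ T ∪ F ∈ K}

/-- The faces of the stellar subdivision of `K` at `F` with new vertex `v`. -/
def stellarS {α : Type*} [DecidableEq α] (K : Set (Finset α)) (F : Finset α) (v : α) :
    Set (Finset α) :=
  {T ∈ K | ¬ F ⊆ T} ∪
  {U | ∃ S T : Finset α, S ⊂ F ∧ (T ∈ lkS K F ∨ T = ∅) ∧ U = insert v (S ∪ T)}

/-- `Γ` is the stellar subdivision of the simplicial complex `Δ` at the face `F`
(of size at least 2) with new vertex `v ∉ Δ.V`. -/
def IsStellar {α : Type*} [DecidableEq α] (Δ Γ : SC α) (F : Finset α) (v : α) : Prop :=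
  F ∈ Δ.faces ∧ 2 ≤ F.card ∧ v ∉ Δ.V ∧
  Γ.V = insert v Δ.V ∧ Γ.faces = stellarS Δ.faces F v

/-- `Γ` is an edge subdivision of `Δ`: a stellar subdivision at a face of size 2. -/
def IsEdgeSubdivOf {α : Type*} [DecidableEq α] (Δ Γ : SC α) : Prop :=
  ∃ (e : Finset α) (v : α), e.card = 2 ∧ IsStellar Δ Γ e v

/-- `F` is a missing face of the collection of faces `K`: it has size at least 2, it is
not a face, and all its proper nonempty subsets are faces. -/
def Missing {α : Type*} (K : Set (Finset α)) (F : Finset α) : Prop :=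
  2 ≤ F.card ∧ F ∉ K ∧ ∀ T ⊂ F, T.Nonempty → T ∈ K

/-- A simplicial complex is flag if all its missing faces have size two. -/
def IsFlag {α : Type*} (Δ : SC α) : Prop := ∀ F, Missing Δ.faces F → F.card = 2

/-- The pair (faces `K`, vertex set `V`) is isomorphic to the pair (faces `L`, vertex
set `W`): some bijection of the vertex sets maps the faces exactly onto the faces. -/
def IsomS {α β : Type*} [DecidableEq α] [DecidableEq β] (K : Set (Finset α)) (V : Set α)
    (L : Set (Finset β)) (W : Set β) : Prop :=
  ∃ f : α → β, Set.BijOn f V W ∧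
    ∀ T : Finset α, ↑T ⊆ V → (T ∈ K ↔ T.image f ∈ L)

/-- Two simplicial complexes are isomorphic. -/
def Isom {α β : Type*} [DecidableEq α] [DecidableEq β] (Δ : SC α) (Γ : SC β) : Prop :=
  IsomS Δ.faces ↑Δ.V Γ.faces ↑Γ.V

/-- One of `X`, `Y` is isomorphic to a stellar subdivision of the other. -/
def StellarIsoStep {α : Type*} [DecidableEq α] (X Y : SC α) : Prop :=
  (∃ (Z : SC α) (F : Finset α) (w : α), IsStellar X Z F w ∧ Isom Z Y) ∨
  (∃ (Z : SC α) (F : Finset α) (w : α), IsStellar Y Z F w ∧ Isom Z X)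

/-- One of `X`, `Y` is isomorphic to an edge subdivision of the other. -/
def EdgeIsoStep {α : Type*} [DecidableEq α] (X Y : SC α) : Prop :=
  (∃ Z : SC α, IsEdgeSubdivOf X Z ∧ Isom Z Y) ∨
  (∃ Z : SC α, IsEdgeSubdivOf Y Z ∧ Isom Z X)

/-- The faces of the contraction of the edge `{a,b}` to a new vertex `v`. -/
def contrS {α : Type*} [DecidableEq α] (K : Set (Finset α)) (a b v : α) :
    Set (Finset α) :=
  {T ∈ K | a ∉ T ∧ b ∉ T} ∪
  {U | ∃ T : Finset α, a ∉ T ∧ b ∉ T ∧ (insert a T ∈ K ∨ insert b T ∈ K) ∧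
    U = insert v T}

/-- `fnum K i` is the number `f_i` of faces of `K` of cardinality `i + 1`. -/
noncomputable def fnum {α : Type*} (K : Set (Finset α)) (i : ℕ) : ℕ :=
  {F ∈ K | F.card = i + 1}.ncard

/-! Sort the edges by how they meet `{a, b}`. Edges avoiding `a` and `b` survive the
contraction unchanged, while the edges at `a` and at `b` (indexed by the neighbourhoods
`N a`, `N b`, which share the edge `ab`) become the edges `v x` for `x ∈ (N a ∪ N b) \ {a, b}`.
Inclusion–exclusion gives `f₁(Δ) - f₁(Δ') = #(N a ∩ N b) + 1`, and the link condition
identifies `N a ∩ N b` with the vertex set of `lk_Δ(ab)`. -/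

theorem fnum_eq_card {α : Type*} (K : Set (Finset α)) (i : ℕ) (s : Finset (Finset α))
    (h : ∀ F, F ∈ s ↔ F ∈ K ∧ F.card = i + 1) : fnum K i = s.card := by
  have hs : {F ∈ K | F.card = i + 1} = ↑s := by
    ext F
    simp only [Set.mem_sep_iff, Finset.mem_coe, h]
  rw [fnum, hs, Set.ncard_coe_finset]

open Classical in
theorem fnum_zero_eq_card_filter {α : Type*} (K : Set (Finset α)) (V : Finset α)
    (hK : ∀ F ∈ K, F ⊆ V) : fnum K 0 = (V.filter fun x => {x} ∈ K).card := by
  rw [fnum_eq_card K 0 ((V.filter fun x => {x} ∈ K).image fun x => {x}),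
    Finset.card_image_of_injective _ Finset.singleton_injective]
  intro F
  simp only [Finset.mem_image, Finset.mem_filter, zero_add, Finset.card_eq_one]
  constructor
  · rintro ⟨x, ⟨-, hx⟩, rfl⟩
    exact ⟨hx, x, rfl⟩
  · rintro ⟨hF, x, rfl⟩
    exact ⟨x, ⟨hK _ hF (Finset.mem_singleton_self x), hF⟩, rfl⟩

theorem singleton_mem_lkS_singleton_iff {α : Type*} [DecidableEq α] (K : Set (Finset α))
    (x a : α) : {x} ∈ lkS K {a} ↔ x ≠ a ∧ {a, x} ∈ K := by
  simp only [lkS, Set.mem_ofPred_eq, Finset.singleton_nonempty, true_and,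
    ← Finset.disjoint_iff_inter_eq_empty, Finset.disjoint_singleton, Finset.singleton_union,
    Finset.pair_comm x a]

namespace SC

variable {α : Type*} (Δ : SC α)

open Classical in
noncomputable def edgeFinset : Finset (Finset α) :=
  Δ.V.powerset.filter fun F => F ∈ Δ.faces ∧ F.card = 2

theorem mem_edgeFinset {F : Finset α} : F ∈ Δ.edgeFinset ↔ F ∈ Δ.faces ∧ F.card = 2 := by
  simp only [edgeFinset, Finset.mem_filter, Finset.mem_powerset, and_iff_right_iff_imp]
  exact fun h => Δ.subset_V F h.1

theorem fnum_one_eq_card_edgeFinset : fnum Δ.faces 1 = Δ.edgeFinset.card :=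
  fnum_eq_card _ 1 _ fun _ => Δ.mem_edgeFinset

open Classical in
theorem fnum_zero_eq_card_V : fnum Δ.faces 0 = Δ.V.card := by
  rw [fnum_zero_eq_card_filter _ _ Δ.subset_V, Finset.filter_true_of_mem Δ.singleton_mem]

variable [DecidableEq α]

open Classical in
noncomputable def neighborFinset (a : α) : Finset α :=
  Δ.V.filter fun x => x ≠ a ∧ {a, x} ∈ Δ.faces

theorem mem_neighborFinset {x a : α} :
    x ∈ Δ.neighborFinset a ↔ x ≠ a ∧ {a, x} ∈ Δ.faces := by
  simp only [neighborFinset, Finset.mem_filter, and_iff_right_iff_imp]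
  exact fun h => Δ.subset_V _ h.2 (by simp)

theorem lkS_subset_V {F T : Finset α} (hT : T ∈ lkS Δ.faces F) : T ⊆ Δ.V :=
  Finset.subset_union_left.trans (Δ.subset_V _ hT.2.2)

theorem fnum_lkS_zero_eq_card_inter {a b : α}
    (hlink : lkS Δ.faces {a, b} = lkS Δ.faces {a} ∩ lkS Δ.faces {b}) :
    fnum (lkS Δ.faces {a, b}) 0 = (Δ.neighborFinset a ∩ Δ.neighborFinset b).card := by
  rw [hlink, fnum_zero_eq_card_filter _ Δ.V fun T hT => Δ.lkS_subset_V hT.1]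
  congr 1
  ext x
  simp only [Finset.mem_filter, Finset.mem_inter, Set.mem_inter_iff,
    singleton_mem_lkS_singleton_iff, Δ.mem_neighborFinset]
  exact ⟨fun h => h.2, fun h => ⟨Δ.subset_V _ h.1.2 (by simp), h⟩⟩

theorem card_filter_mem_edgeFinset (a : α) :
    (Δ.edgeFinset.filter (a ∈ ·)).card = (Δ.neighborFinset a).card := by
  have himage : Δ.edgeFinset.filter (a ∈ ·) = (Δ.neighborFinset a).image fun x => {a, x} := by
    ext F
    simp only [Finset.mem_filter, Δ.mem_edgeFinset, Finset.mem_image, Δ.mem_neighborFinset]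
    constructor
    · rintro ⟨⟨hF, hc⟩, haF⟩
      obtain ⟨x, y, hxy, rfl⟩ := Finset.card_eq_two.mp hc
      rcases Finset.mem_insert.mp haF with rfl | hay
      · exact ⟨y, ⟨hxy.symm, hF⟩, rfl⟩
      · obtain rfl := Finset.mem_singleton.mp hay
        exact ⟨x, ⟨hxy, by rwa [Finset.pair_comm]⟩, Finset.pair_comm _ _⟩
    · rintro ⟨x, ⟨hxa, hx⟩, rfl⟩
      exact ⟨⟨hx, Finset.card_pair hxa.symm⟩, Finset.mem_insert_self a {x}⟩
  rw [himage, Finset.card_image_of_injOn]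
  intro x hx y _ (hxy : ({a, x} : Finset α) = {a, y})
  have : x ∈ ({a, y} : Finset α) := by simp [← hxy]
  rcases Finset.mem_insert.mp this with h | h
  · exact absurd h (Δ.mem_neighborFinset.mp hx).1
  · exact Finset.mem_singleton.mp h

theorem card_edgeFinset_add_one {a b : α} (hab : a ≠ b) (he : {a, b} ∈ Δ.faces) :
    Δ.edgeFinset.card + 1 = (Δ.edgeFinset.filter fun F => ¬(a ∈ F ∨ b ∈ F)).card +
      (Δ.neighborFinset a).card + (Δ.neighborFinset b).card := by
  have hboth : Δ.edgeFinset.filter (a ∈ ·) ∩ Δ.edgeFinset.filter (b ∈ ·) = {{a, b}} := by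
    ext F
    simp only [Finset.mem_inter, Finset.mem_filter, Δ.mem_edgeFinset, Finset.mem_singleton]
    constructor
    · rintro ⟨⟨⟨-, hc⟩, haF⟩, -, hbF⟩
      refine (Finset.eq_of_subset_of_card_le ?_ (by rw [hc, Finset.card_pair hab])).symm
      exact Finset.insert_subset haF (Finset.singleton_subset_iff.mpr hbF)
    · rintro rfl
      have hc := Finset.card_pair hab
      exact ⟨⟨⟨he, hc⟩, by simp⟩, ⟨he, hc⟩, by simp⟩
  have hunion := Finset.card_union_add_card_inter (Δ.edgeFinset.filter (a ∈ ·))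
    (Δ.edgeFinset.filter (b ∈ ·))
  rw [hboth, ← Finset.filter_or, Finset.card_singleton, Δ.card_filter_mem_edgeFinset,
    Δ.card_filter_mem_edgeFinset] at hunion
  rw [← Finset.card_filter_add_card_filter_not (s := Δ.edgeFinset) fun F => a ∈ F ∨ b ∈ F]
  omega

theorem card_edgeFinset_eq (v : α) :
    Δ.edgeFinset.card = (Δ.edgeFinset.filter (v ∉ ·)).card + (Δ.neighborFinset v).card := by
  rw [← Δ.card_filter_mem_edgeFinset, add_comm, Finset.card_filter_add_card_filter_not]

variable {Δ} {Δ' : SC α} {a b v : α}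

theorem filter_not_mem_edgeFinset_of_contr (hv : v ∉ Δ.V)
    (hfaces' : Δ'.faces = contrS Δ.faces a b v) :
    Δ'.edgeFinset.filter (v ∉ ·) = Δ.edgeFinset.filter fun F => ¬(a ∈ F ∨ b ∈ F) := by
  ext F
  simp only [Finset.mem_filter, mem_edgeFinset, hfaces', contrS, Set.mem_union,
    Set.mem_ofPred_eq, not_or]
  constructor
  · rintro ⟨⟨⟨hF, haF, hbF⟩ | ⟨T, -, -, -, rfl⟩, hc⟩, hvF⟩
    · exact ⟨⟨hF, hc⟩, haF, hbF⟩
    · exact absurd (Finset.mem_insert_self v T) hvF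
  · rintro ⟨⟨hF, hc⟩, habF⟩
    exact ⟨⟨Or.inl ⟨hF, habF⟩, hc⟩, fun h => hv (Δ.subset_V _ hF h)⟩

theorem neighborFinset_of_contr (hv : v ∉ Δ.V)
    (hfaces' : Δ'.faces = contrS Δ.faces a b v) :
    Δ'.neighborFinset v = (Δ.neighborFinset a ∪ Δ.neighborFinset b) \ {a, b} := by
  ext x
  simp only [mem_neighborFinset, Finset.mem_sdiff, Finset.mem_union, Finset.mem_insert,
    Finset.mem_singleton, hfaces', contrS, Set.mem_union, Set.mem_ofPred_eq, not_or]
  constructor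
  · rintro ⟨hxv, ⟨hF, -⟩ | ⟨T, haT, hbT, hT, hTx⟩⟩
    · exact absurd (Δ.subset_V _ hF (Finset.mem_insert_self v {x})) hv
    · have hvT : v ∉ T := fun hvT => hv <| by
        rcases hT with hT | hT <;> exact Δ.subset_V _ hT (Finset.mem_insert_of_mem hvT)
      have hTx : T = {x} := by
        simpa [Finset.erase_insert hvT, Finset.erase_eq_of_notMem, hxv.symm]
          using (congrArg (·.erase v) hTx).symm
      subst hTx
      rw [Finset.mem_singleton] at haT hbT
      exact ⟨hT.imp (⟨Ne.symm haT, ·⟩) (⟨Ne.symm hbT, ·⟩), Ne.symm haT, Ne.symm hbT⟩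
  · rintro ⟨hx, hxa, hxb⟩
    have hxV : x ∈ Δ.V := by
      rcases hx with ⟨-, hx⟩ | ⟨-, hx⟩ <;> exact Δ.subset_V _ hx (by simp)
    refine ⟨fun hxv => hv (hxv ▸ hxV),
      Or.inr ⟨{x}, ?_, ?_, hx.imp And.right And.right, rfl⟩⟩
    · exact Finset.mem_singleton.not.mpr (Ne.symm hxa)
    · exact Finset.mem_singleton.not.mpr (Ne.symm hxb)

theorem fnum_zero_of_contr (hab : a ≠ b) (he : {a, b} ∈ Δ.faces) (hv : v ∉ Δ.V)
    (hV' : Δ'.V = insert v (Δ.V \ {a, b})) : fnum Δ'.faces 0 + 1 = fnum Δ.faces 0 := by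
  have hsub : {a, b} ⊆ Δ.V := Δ.subset_V _ he
  have hle := Finset.card_le_card hsub
  rw [Δ'.fnum_zero_eq_card_V, Δ.fnum_zero_eq_card_V, hV',
    Finset.card_insert_of_notMem fun h => hv (Finset.mem_sdiff.mp h).1,
    Finset.card_sdiff_of_subset hsub]
  rw [Finset.card_pair hab] at hle ⊢
  omega

theorem fnum_one_of_contr (hab : a ≠ b) (he : {a, b} ∈ Δ.faces) (hv : v ∉ Δ.V)
    (hfaces' : Δ'.faces = contrS Δ.faces a b v) :
    fnum Δ'.faces 1 + (Δ.neighborFinset a ∩ Δ.neighborFinset b).card + 1 =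
      fnum Δ.faces 1 := by
  have hsub : {a, b} ⊆ Δ.neighborFinset a ∪ Δ.neighborFinset b := by
    refine Finset.insert_subset ?_ (Finset.singleton_subset_iff.mpr ?_)
    · exact Finset.mem_union_right _
        (Δ.mem_neighborFinset.mpr ⟨hab, Finset.pair_comm a b ▸ he⟩)
    · exact Finset.mem_union_left _ (Δ.mem_neighborFinset.mpr ⟨hab.symm, he⟩)
  have hle := Finset.card_le_card hsub
  have hunion := Finset.card_union_add_card_inter (Δ.neighborFinset a) (Δ.neighborFinset b)
  have hedges := Δ.card_edgeFinset_add_one hab he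
  rw [Δ'.fnum_one_eq_card_edgeFinset, Δ.fnum_one_eq_card_edgeFinset, Δ'.card_edgeFinset_eq v,
    filter_not_mem_edgeFinset_of_contr hv hfaces',
    neighborFinset_of_contr hv hfaces', Finset.card_sdiff_of_subset hsub]
  rw [Finset.card_pair hab] at hle ⊢
  omega

end SC

/-- For an edge `e = {a,b}` of `Δ` satisfying the link condition, the
contraction `Δ' = Δ/e` satisfies `f₀(Δ') = f₀(Δ) - 1` and
`f₁(Δ') = f₁(Δ) - f₀(lk_Δ(e)) - 1`; consequently `γ₂(Δ) = γ₂(Δ') + γ₁(lk_Δ(e))`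
for every parameter `d` (with `γ₁` computed with parameter `d - 2`). -/
theorem gamma_two_of_contraction {α : Type*} [DecidableEq α]
    (Δ : SC α) (a b : α) (hab : a ≠ b) (he : ({a, b} : Finset α) ∈ Δ.faces)
    (hlink : lkS Δ.faces {a, b} = lkS Δ.faces {a} ∩ lkS Δ.faces {b})
    (v : α) (hv : v ∉ Δ.V)
    (Δ' : SC α) (hV' : Δ'.V = insert v (Δ.V \ {a, b}))
    (hfaces' : Δ'.faces = contrS Δ.faces a b v) :
    (fnum Δ'.faces 0 : ℤ) = (fnum Δ.faces 0 : ℤ) - 1 ∧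
    (fnum Δ'.faces 1 : ℤ) =
      (fnum Δ.faces 1 : ℤ) - (fnum (lkS Δ.faces {a, b}) 0 : ℤ) - 1 ∧
    ∀ d : ℤ,
      (fnum Δ.faces 1 : ℤ) - (2 * d - 3) * (fnum Δ.faces 0 : ℤ) + 2 * d * (d - 2) =
        ((fnum Δ'.faces 1 : ℤ) - (2 * d - 3) * (fnum Δ'.faces 0 : ℤ) + 2 * d * (d - 2))
        + ((fnum (lkS Δ.faces {a, b}) 0 : ℤ) - 2 * (d - 2)) := by
  have h0 := SC.fnum_zero_of_contr hab he hv hV'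
  have h1 := SC.fnum_one_of_contr hab he hv hfaces'
  rw [Δ.fnum_lkS_zero_eq_card_inter hlink]
  have g0 : (fnum Δ'.faces 0 : ℤ) = (fnum Δ.faces 0 : ℤ) - 1 := by omega
  have g1 : (fnum Δ'.faces 1 : ℤ) =
      (fnum Δ.faces 1 : ℤ) - ((Δ.neighborFinset a ∩ Δ.neighborFinset b).card : ℤ) - 1 := by
    omega
  exact ⟨g0, g1, fun d => by rw [g0, g1]; ring⟩
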